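/- arXiv:math/0701320 — 12 statements merged into one kernel-verified Lean document; each statement's English description precedes it below -/
import Mathlib

section
/- Let A be an associative algebra over a commutative ring k, M an A-bimodule, and π : M → A a linear map. Then π is a generalized Rota-Baxter operator if and only if its graph L_π = {(π(m), m) | m ∈ M} is closed under the multiplication of the semidirect product algebra A ⊕₀ M (i.e., L_π is a subalgebra of A ⊕₀ M). -/
/-- A linear map `π : M → A` is a generalized Rota-Baxter operator if and
only if its graph `L_π = {(π m, m) | m ∈ M}` is closed under the multiplication
`(a, m) * (b, n) = (ab, a·n + m·b)` of the semidirect product algebra `A ⊕₀ M`. -/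
theorem stmt0 (k A M : Type*) [CommRing k]
    [NonUnitalRing A] [Module k A] [SMulCommClass k A A] [IsScalarTower k A A]
    [AddCommGroup M] [Module k M]
    (l : A →ₗ[k] M →ₗ[k] M) (r : M →ₗ[k] A →ₗ[k] M)
    (hl : ∀ (a b : A) (m : M), l (a * b) m = l a (l b m))
    (hr : ∀ (m : M) (a b : A), r (r m a) b = r m (a * b))
    (hlr : ∀ (a : A) (m : M) (b : A), r (l a m) b = l a (r m b))
    (π : M →ₗ[k] A) :
    (∀ m n : M, π m * π n = π (l (π m) n + r m (π n))) ↔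
      ∀ x y : A × M, x ∈ Set.range (fun m : M => ((π m, m) : A × M)) →
        y ∈ Set.range (fun m : M => ((π m, m) : A × M)) →
        ((x.1 * y.1, l x.1 y.2 + r x.2 y.1) : A × M) ∈
          Set.range (fun m : M => ((π m, m) : A × M)) := by
  constructor
  · rintro h x y ⟨m, rfl⟩ ⟨n, rfl⟩
    exact ⟨l (π m) n + r m (π n), by simp [h m n]⟩
  · intro h m n
    obtain ⟨p, hp⟩ := h (π m, m) (π n, n) ⟨m, rfl⟩ ⟨n, rfl⟩
    have h1 : π p = π m * π n := congrArg Prod.fst hp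
    have h2 : p = l (π m) n + r m (π n) := congrArg Prod.snd hp
    rw [← h1, h2]
end

section
/- Let A be an associative algebra over a commutative ring k, M an A-bimodule, and π : M → A a linear map. Define the lift π̂ : A ⊕ M → A ⊕ M by π̂(a, m) := (π(m), 0). Then π is a generalized Rota-Baxter operator if and only if π̂ is a Rota-Baxter operator of weight zero on the semidirect product algebra A ⊕₀ M, i.e., π̂(x) * π̂(y) = π̂(π̂(x) * y + x * π̂(y)) for all x, y ∈ A ⊕₀ M. -/
section

variable {k A M : Type*} [CommRing k]
  [NonUnitalRing A] [Module k A] [SMulCommClass k A A] [IsScalarTower k A A]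
  [AddCommGroup M] [Module k M]

/-- The multiplication of the semidirect product algebra `A ⊕₀ M`:
`(a, m) * (b, n) := (ab, a·n + m·b)`. -/
def sdMul (l : A →ₗ[k] M →ₗ[k] M) (r : M →ₗ[k] A →ₗ[k] M)
    (x y : A × M) : A × M :=
  (x.1 * y.1, l x.1 y.2 + r x.2 y.1)

/-- The lift `π̂ : A ⊕ M → A ⊕ M`, `π̂(a, m) := (π m, 0)`. -/
def liftHat (π : M →ₗ[k] A) (x : A × M) : A × M := (π x.2, 0)

/-- `π` is a generalized Rota-Baxter operator iff the lift `π̂` is a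
Rota-Baxter operator of weight zero on the semidirect product algebra `A ⊕₀ M`. -/
theorem stmt1
    (l : A →ₗ[k] M →ₗ[k] M) (r : M →ₗ[k] A →ₗ[k] M)
    (hl : ∀ (a b : A) (m : M), l (a * b) m = l a (l b m))
    (hr : ∀ (m : M) (a b : A), r (r m a) b = r m (a * b))
    (hlr : ∀ (a : A) (m : M) (b : A), r (l a m) b = l a (r m b))
    (π : M →ₗ[k] A) :
    (∀ m n : M, π m * π n = π (l (π m) n + r m (π n))) ↔
      ∀ x y : A × M,
        sdMul l r (liftHat π x) (liftHat π y) =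
          liftHat π (sdMul l r (liftHat π x) y + sdMul l r x (liftHat π y)) := by
  constructor
  · intro h x y
    simp [sdMul, liftHat, Prod.ext_iff, h x.2 y.2]
  · intro h m n
    have := h (0, m) (0, n)
    simpa [sdMul, liftHat, Prod.ext_iff] using this

end
end

section
/- Let A be an associative algebra over a commutative ring k, M an A-bimodule, and π : M → A a generalized Rota-Baxter operator. Then the two bilinear operations on M defined by m ≻ n := π(m)·n and m ≺ n := m·π(n) satisfy the three dendriform algebra axioms: (m ≺ n) ≺ l = m ≺ (n ≻ l + n ≺ l), (m ≻ n) ≺ l = m ≻ (n ≺ l), and m ≻ (n ≻ l) = (m ≻ n + m ≺ n) ≻ l, for all m, n, l ∈ M. -/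
/-- If `π : M → A` is a generalized Rota-Baxter operator, then
`m ≻ n := π(m)·n` and `m ≺ n := m·π(n)` satisfy the three dendriform axioms. -/
theorem stmt2 (k A M : Type*) [CommRing k]
    [NonUnitalRing A] [Module k A] [SMulCommClass k A A] [IsScalarTower k A A]
    [AddCommGroup M] [Module k M]
    (l : A →ₗ[k] M →ₗ[k] M) (r : M →ₗ[k] A →ₗ[k] M)
    (hl : ∀ (a b : A) (m : M), l (a * b) m = l a (l b m))
    (hr : ∀ (m : M) (a b : A), r (r m a) b = r m (a * b))
    (hlr : ∀ (a : A) (m : M) (b : A), r (l a m) b = l a (r m b))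
    (π : M →ₗ[k] A)
    (hπ : ∀ m n : M, π m * π n = π (l (π m) n + r m (π n))) :
    (∀ m n p : M, r (r m (π n)) (π p) = r m (π (l (π n) p + r n (π p)))) ∧
    (∀ m n p : M, r (l (π m) n) (π p) = l (π m) (r n (π p))) ∧
    (∀ m n p : M, l (π m) (l (π n) p) = l (π (l (π m) n + r m (π n))) p) := by
  refine ⟨fun m n p => ?_, fun m n p => hlr _ _ _, fun m n p => ?_⟩
  · rw [hr, hπ]
  · rw [← hπ, hl]
end

section
/- Let A be an associative algebra over a commutative ring k, M an A-bimodule, and π : M → A a generalized Rota-Baxter operator. Let M_ass denote M with the associative multiplication mn := π(m)·n + m·π(n). Then the actions a ·_π m := aπ(m) − π(a·m) and m ·_π a := π(m)a − π(m·a) make the k-module A into an M_ass-bimodule; that is, for all m, n ∈ M_ass and a ∈ A: m ·_π (n ·_π a) = (mn) ·_π a, (a ·_π m) ·_π n = a ·_π (mn), and (m ·_π a) ·_π n = m ·_π (a ·_π n). -/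
/-- If `π : M → A` is a generalized Rota-Baxter operator, then the
actions `a ·_π m := a π(m) − π(a·m)` and `m ·_π a := π(m) a − π(m·a)` make `A`
into a bimodule over `M_ass` (the algebra `M` with `m n := π(m)·n + m·π(n)`). -/
theorem stmt5 (k A M : Type*) [CommRing k]
    [NonUnitalRing A] [Module k A] [SMulCommClass k A A] [IsScalarTower k A A]
    [AddCommGroup M] [Module k M]
    (l : A →ₗ[k] M →ₗ[k] M) (r : M →ₗ[k] A →ₗ[k] M)
    (hl : ∀ (a b : A) (m : M), l (a * b) m = l a (l b m))
    (hr : ∀ (m : M) (a b : A), r (r m a) b = r m (a * b))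
    (hlr : ∀ (a : A) (m : M) (b : A), r (l a m) b = l a (r m b))
    (π : M →ₗ[k] A)
    (hπ : ∀ m n : M, π m * π n = π (l (π m) n + r m (π n))) :
    -- left action associativity: m ·_π (n ·_π a) = (m n) ·_π a
    (∀ (m n : M) (a : A),
      π m * (π n * a - π (r n a)) - π (r m (π n * a - π (r n a))) =
        π (l (π m) n + r m (π n)) * a - π (r (l (π m) n + r m (π n)) a)) ∧
    -- right action associativity: (a ·_π m) ·_π n = a ·_π (m n)
    (∀ (m n : M) (a : A),
      (a * π m - π (l a m)) * π n - π (l (a * π m - π (l a m)) n) =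
        a * π (l (π m) n + r m (π n)) - π (l a (l (π m) n + r m (π n)))) ∧
    -- compatibility: (m ·_π a) ·_π n = m ·_π (a ·_π n)
    (∀ (m n : M) (a : A),
      (π m * a - π (r m a)) * π n - π (l (π m * a - π (r m a)) n) =
        π m * (a * π n - π (l a n)) - π (r m (a * π n - π (l a n)))) := by
  refine ⟨?_, ?_, ?_⟩ <;> intro m n a <;>
    simp only [map_add, map_sub, LinearMap.sub_apply, LinearMap.add_apply,
      mul_sub, sub_mul, ← hπ, hl, hr, hlr, mul_assoc] <;>
    simp only [hπ, map_add, hl, hr, hlr] <;> abel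
end

section
/- Let A be an associative algebra over a commutative ring k, M an A-bimodule, π : M → A a generalized Rota-Baxter operator, and Ω : A → M a derivation (Ω(ab) = Ω(a)·b + a·Ω(b)). Suppose there is a central element z ∈ Z(A) such that Ω(π(m)) = z·m for all m ∈ M. Then Ω is a generalized Rota-Baxter operator from the M_ass-bimodule A to the associative algebra M_ass; that is, Ω(a)Ω(b) = Ω(Ω(a) ·_π b + a ·_π Ω(b)) for all a, b ∈ A, where mn := π(m)·n + m·π(n) is the multiplication of M_ass, a ·_π m := aπ(m) − π(a·m), and m ·_π a := π(m)a − π(m·a). -/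
/-- Let `π : M → A` be a generalized Rota-Baxter operator and
`Ω : A → M` a derivation with `Ω(π(m)) = z·m` for a central element `z ∈ Z(A)`.
Then `Ω` is a generalized Rota-Baxter operator from the `M_ass`-bimodule `A` to
the associative algebra `M_ass`:
`Ω(a) Ω(b) = Ω(Ω(a) ·_π b + a ·_π Ω(b))`, where `m n := π(m)·n + m·π(n)`,
`a ·_π m := a π(m) − π(a·m)` and `m ·_π a := π(m) a − π(m·a)`. -/
theorem stmt6 (k A M : Type*) [CommRing k]
    [NonUnitalRing A] [Module k A] [SMulCommClass k A A] [IsScalarTower k A A]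
    [AddCommGroup M] [Module k M]
    (l : A →ₗ[k] M →ₗ[k] M) (r : M →ₗ[k] A →ₗ[k] M)
    (hl : ∀ (a b : A) (m : M), l (a * b) m = l a (l b m))
    (hr : ∀ (m : M) (a b : A), r (r m a) b = r m (a * b))
    (hlr : ∀ (a : A) (m : M) (b : A), r (l a m) b = l a (r m b))
    (π : M →ₗ[k] A)
    (hπ : ∀ m n : M, π m * π n = π (l (π m) n + r m (π n)))
    (Ω : A →ₗ[k] M)
    (hΩ : ∀ a b : A, Ω (a * b) = r (Ω a) b + l a (Ω b))
    (z : A) (hz : ∀ a : A, z * a = a * z)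
    (hΩπ : ∀ m : M, Ω (π m) = l z m) :
    ∀ a b : A,
      l (π (Ω a)) (Ω b) + r (Ω a) (π (Ω b)) =
        Ω ((π (Ω a) * b - π (r (Ω a) b)) + (a * π (Ω b) - π (l a (Ω b)))) := by
  intro a b
  have h1 : l a (l z (Ω b)) = l z (l a (Ω b)) := by
    rw [← hl, ← hl, hz]
  simp only [map_add, map_sub, hΩ, hΩπ, hlr, h1]
  abel
end

section
/- Let A be an associative algebra over a commutative ring k, M an A-bimodule, π : M → A a generalized Rota-Baxter operator, and Ω : A → M a derivation such that Ω(π(m)) = z·m for all m ∈ M, where z is a central element of A. Then N := π ∘ Ω : A → A is an associative Nijenhuis operator, i.e., N(a)N(b) = N(N(a)b + aN(b)) − N(N(ab)) for all a, b ∈ A. -/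
/-- If `π : M → A` is a generalized Rota-Baxter operator and
`Ω : A → M` is a derivation with `Ω(π(m)) = z·m` for a central `z ∈ Z(A)`,
then `N := π ∘ Ω` is an associative Nijenhuis operator:
`N(a)N(b) = N(N(a)b + aN(b)) − N(N(ab))`. -/
theorem stmt7 (k A M : Type*) [CommRing k]
    [NonUnitalRing A] [Module k A] [SMulCommClass k A A] [IsScalarTower k A A]
    [AddCommGroup M] [Module k M]
    (l : A →ₗ[k] M →ₗ[k] M) (r : M →ₗ[k] A →ₗ[k] M)
    (hl : ∀ (a b : A) (m : M), l (a * b) m = l a (l b m))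
    (hr : ∀ (m : M) (a b : A), r (r m a) b = r m (a * b))
    (hlr : ∀ (a : A) (m : M) (b : A), r (l a m) b = l a (r m b))
    (π : M →ₗ[k] A)
    (hπ : ∀ m n : M, π m * π n = π (l (π m) n + r m (π n)))
    (Ω : A →ₗ[k] M)
    (hΩ : ∀ a b : A, Ω (a * b) = r (Ω a) b + l a (Ω b))
    (z : A) (hz : ∀ a : A, z * a = a * z)
    (hΩπ : ∀ m : M, Ω (π m) = l z m) :
    ∀ a b : A,
      π (Ω a) * π (Ω b) =
        π (Ω (π (Ω a) * b + a * π (Ω b))) - π (Ω (π (Ω (a * b)))) := by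
  intro a b
  have h2 : l a (l z (Ω b)) = l z (l a (Ω b)) := by
    rw [← hl, ← hl, hz]
  rw [hπ, map_add Ω, hΩ (π (Ω a)) b, hΩ a (π (Ω b)), hΩπ, hΩπ, hΩπ (Ω (a*b)),
    hΩ a b, hlr, h2, map_add (l z), map_add, map_add, map_add, map_add]
  simp only [map_add]
  abel
end

section
/- Let A be an associative algebra over a commutative ring k, M an A-bimodule, and d : A → M an invertible derivation (a bijective linear map with d(ab) = d(a)·b + a·d(b)). Then the inverse map d⁻¹ : M → A is a generalized Rota-Baxter operator. -/
/-- If `d : A → M` is an invertible (bijective linear) derivation,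
then the inverse map `d⁻¹ : M → A` is a generalized Rota-Baxter operator. -/
theorem stmt8 (k A M : Type*) [CommRing k]
    [NonUnitalRing A] [Module k A] [SMulCommClass k A A] [IsScalarTower k A A]
    [AddCommGroup M] [Module k M]
    (l : A →ₗ[k] M →ₗ[k] M) (r : M →ₗ[k] A →ₗ[k] M)
    (hl : ∀ (a b : A) (m : M), l (a * b) m = l a (l b m))
    (hr : ∀ (m : M) (a b : A), r (r m a) b = r m (a * b))
    (hlr : ∀ (a : A) (m : M) (b : A), r (l a m) b = l a (r m b))
    (d : A ≃ₗ[k] M)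
    (hd : ∀ a b : A, d (a * b) = r (d a) b + l a (d b)) :
    ∀ m n : M,
      d.symm m * d.symm n =
        d.symm (l (d.symm m) n + r m (d.symm n)) := by
  intro m n
  apply d.injective
  rw [d.apply_symm_apply, hd (d.symm m) (d.symm n), d.apply_symm_apply, d.apply_symm_apply,
    add_comm]
end

section
/- Let A be an associative algebra over a commutative ring k and let r = Σᵢ aᵢ ⊗ bᵢ ∈ A ⊗ A be a skew-symmetric solution of the associative Yang-Baxter equation, i.e., Σᵢⱼ aᵢaⱼ ⊗ bⱼ ⊗ bᵢ = Σᵢⱼ aᵢ ⊗ bᵢaⱼ ⊗ bⱼ − Σᵢⱼ aⱼ ⊗ aᵢ ⊗ bᵢbⱼ, and skew-symmetry means Σᵢ aᵢ f(bᵢ) = −Σᵢ bᵢ f(aᵢ) for every linear functional f ∈ A* = Hom_k(A, k). Then the linear map r̃ : A* → A defined by r̃(f) := Σᵢ aᵢ f(bᵢ) is a generalized Rota-Baxter operator, where A* carries the A-bimodule structure (a·f)(b) := f(ba) and (f·a)(b) := f(ab). -/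
open TensorProduct

/-- Let `r = Σᵢ aᵢ ⊗ bᵢ ∈ A ⊗ A` be a skew-symmetric solution of the
associative Yang-Baxter equation
`Σᵢⱼ aᵢaⱼ ⊗ bⱼ ⊗ bᵢ = Σᵢⱼ aᵢ ⊗ bᵢaⱼ ⊗ bⱼ − Σᵢⱼ aⱼ ⊗ aᵢ ⊗ bᵢbⱼ`;
skew-symmetry means `Σᵢ f(bᵢ) aᵢ = −Σᵢ f(aᵢ) bᵢ` for every `f ∈ A* = Hom_k(A, k)`.
Then `r̃ : A* → A`, `r̃(f) := Σᵢ f(bᵢ) aᵢ`, is a generalized Rota-Baxter operator,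
where `A*` carries the bimodule structure `(a·f)(x) := f(xa)`, `(f·a)(x) := f(ax)`. -/
theorem stmt10 (k A : Type*) [CommRing k]
    [NonUnitalRing A] [Module k A] [SMulCommClass k A A] [IsScalarTower k A A]
    (ι : Type*) [Fintype ι] (a b : ι → A)
    (haybe :
      ∑ i, ∑ j, (a i * a j) ⊗ₜ[k] ((b j) ⊗ₜ[k] (b i)) =
        ∑ i, ∑ j, (a i) ⊗ₜ[k] ((b i * a j) ⊗ₜ[k] (b j)) -
          ∑ i, ∑ j, (a j) ⊗ₜ[k] ((a i) ⊗ₜ[k] (b i * b j)))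
    (hskew : ∀ f : A →ₗ[k] k, ∑ i, f (b i) • a i = - ∑ i, f (a i) • b i) :
    ∀ f g : A →ₗ[k] k,
      (∑ i, f (b i) • a i) * (∑ i, g (b i) • a i) =
        ∑ i,
          ((g.comp (LinearMap.mulRight k (∑ j, f (b j) • a j))
              + f.comp (LinearMap.mulLeft k (∑ j, g (b j) • a j))) (b i)) • a i := by
  intro f g
  set μ : A ⊗[k] A →ₗ[k] k :=
    TensorProduct.lift ((LinearMap.mul k k).compl₁₂ g f) with hμ
  set Φ : A ⊗[k] (A ⊗[k] A) →ₗ[k] A :=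
    (TensorProduct.rid k A).toLinearMap.comp (LinearMap.lTensor A μ) with hΦ
  have hΦt : ∀ x y z : A, Φ (x ⊗ₜ[k] (y ⊗ₜ[k] z)) = (g y * f z) • x := by
    intro x y z
    simp [hΦ, hμ, TensorProduct.rid_tmul]
  have h := congrArg Φ haybe
  simp only [map_sum, map_sub, hΦt] at h
  -- h : ∑ i, ∑ j, (g (b j) * f (b i)) • (a i * a j)
  --   = ∑ i, ∑ j, (g (b i * a j) * f (b j)) • a i - ∑ i, ∑ j, (g (a i) * f (b i * b j)) • a j
  have hL : (∑ i, f (b i) • a i) * (∑ i, g (b i) • a i)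
      = ∑ i, ∑ j, (g (b j) * f (b i)) • (a i * a j) := by
    rw [Finset.sum_mul]
    refine Finset.sum_congr rfl fun i _ => ?_
    rw [Finset.mul_sum]
    refine Finset.sum_congr rfl fun j _ => ?_
    rw [smul_mul_assoc, mul_smul_comm, smul_smul, mul_comm]
  have hR1 : ∑ i, g (b i * ∑ j, f (b j) • a j) • a i
      = ∑ i, ∑ j, (g (b i * a j) * f (b j)) • a i := by
    refine Finset.sum_congr rfl fun i _ => ?_
    rw [Finset.mul_sum, map_sum, Finset.sum_smul]
    refine Finset.sum_congr rfl fun j _ => ?_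
    rw [mul_smul_comm, map_smul, smul_eq_mul, mul_comm]
  have hR2 : ∑ i, f ((∑ j, g (b j) • a j) * b i) • a i
      = - ∑ i, ∑ j, (g (a j) * f (b j * b i)) • a i := by
    rw [hskew g]
    have key : ∀ i, f ((-∑ j, g (a j) • b j) * b i) • a i
        = - ∑ j, (g (a j) * f (b j * b i)) • a i := by
      intro i
      rw [neg_mul, map_neg, neg_smul, Finset.sum_mul, map_sum, Finset.sum_smul]
      congr 1
      refine Finset.sum_congr rfl fun j _ => ?_
      rw [smul_mul_assoc, map_smul, smul_eq_mul]
    simp only [key, Finset.sum_neg_distrib]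
  simp only [LinearMap.add_apply, LinearMap.coe_comp, Function.comp_apply,
    LinearMap.mulRight_apply, LinearMap.mulLeft_apply, add_smul, Finset.sum_add_distrib]
  rw [hL, h, hR1, hR2]
  rw [sub_eq_add_neg]
  congr 1
  exact congrArg Neg.neg Finset.sum_comm
end

section
/- Let A be an associative algebra over a commutative ring k, M an A-bimodule, φ ∈ C²(A, M) a Hochschild 2-cocycle, and π : M → A a linear map. Then the graph L_π = {(π(m), m) | m ∈ M} is closed under the multiplication of the twisted extension algebra A ⊕_φ M if and only if π is a φ-twisted Rota-Baxter operator. -/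
/-- Given a Hochschild 2-cocycle `φ ∈ C²(A, M)` and a linear map
`π : M → A`, the graph `L_π = {(π m, m)}` is closed under the multiplication
`(a, m) * (b, n) := (ab, a·n + m·b + φ(a,b))` of the twisted extension algebra
`A ⊕_φ M` if and only if `π` is a `φ`-twisted Rota-Baxter operator. -/
theorem stmt11 (k A M : Type*) [CommRing k]
    [NonUnitalRing A] [Module k A] [SMulCommClass k A A] [IsScalarTower k A A]
    [AddCommGroup M] [Module k M]
    (l : A →ₗ[k] M →ₗ[k] M) (r : M →ₗ[k] A →ₗ[k] M)
    (hl : ∀ (a b : A) (m : M), l (a * b) m = l a (l b m))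
    (hr : ∀ (m : M) (a b : A), r (r m a) b = r m (a * b))
    (hlr : ∀ (a : A) (m : M) (b : A), r (l a m) b = l a (r m b))
    (φ : A →ₗ[k] A →ₗ[k] M)
    (hφ : ∀ a b c : A, l a (φ b c) - φ (a * b) c + φ a (b * c) - r (φ a b) c = 0)
    (π : M →ₗ[k] A) :
    (∀ x y : A × M, x ∈ Set.range (fun m : M => ((π m, m) : A × M)) →
        y ∈ Set.range (fun m : M => ((π m, m) : A × M)) →
        ((x.1 * y.1, l x.1 y.2 + r x.2 y.1 + φ x.1 y.1) : A × M) ∈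
          Set.range (fun m : M => ((π m, m) : A × M))) ↔
      (∀ m n : M,
        π m * π n = π (l (π m) n + r m (π n)) + π (φ (π m) (π n))) := by
  constructor
  · intro h m n
    obtain ⟨p, hp⟩ := h (π m, m) (π n, n) ⟨m, rfl⟩ ⟨n, rfl⟩
    have h1 : π p = π m * π n := congrArg Prod.fst hp
    have h2 : p = l (π m) n + r m (π n) + φ (π m) (π n) := congrArg Prod.snd hp
    rw [← h1, h2, map_add]
  · rintro h x y ⟨m, rfl⟩ ⟨n, rfl⟩
    refine ⟨l (π m) n + r m (π n) + φ (π m) (π n), Prod.ext ?_ rfl⟩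
    show π _ = _
    rw [map_add, h m n]
end

section
/- Let A be an associative algebra over a commutative ring k, M an A-bimodule, φ ∈ C²(A, M) a Hochschild 2-cocycle, and π : M → A a φ-twisted Rota-Baxter operator. Then the multiplication on M defined by m × n := π(m)·n + m·π(n) + φ(π(m), π(n)) is associative, and π is an algebra homomorphism from (M, ×) to A, i.e., π(m × n) = π(m)π(n) for all m, n ∈ M. -/
/-- If `π : M → A` is a `φ`-twisted Rota-Baxter operator, then
`m × n := π(m)·n + m·π(n) + φ(π(m), π(n))` is an associative multiplication on `M`,
and `π` is an algebra homomorphism: `π(m × n) = π(m) π(n)`. -/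
theorem stmt12 (k A M : Type*) [CommRing k]
    [NonUnitalRing A] [Module k A] [SMulCommClass k A A] [IsScalarTower k A A]
    [AddCommGroup M] [Module k M]
    (l : A →ₗ[k] M →ₗ[k] M) (r : M →ₗ[k] A →ₗ[k] M)
    (hl : ∀ (a b : A) (m : M), l (a * b) m = l a (l b m))
    (hr : ∀ (m : M) (a b : A), r (r m a) b = r m (a * b))
    (hlr : ∀ (a : A) (m : M) (b : A), r (l a m) b = l a (r m b))
    (φ : A →ₗ[k] A →ₗ[k] M)
    (hφ : ∀ a b c : A, l a (φ b c) - φ (a * b) c + φ a (b * c) - r (φ a b) c = 0)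
    (π : M →ₗ[k] A)
    (hπ : ∀ m n : M,
      π m * π n = π (l (π m) n + r m (π n)) + π (φ (π m) (π n))) :
    (∀ m n p : M,
      (fun x y : M => l (π x) y + r x (π y) + φ (π x) (π y))
        ((fun x y : M => l (π x) y + r x (π y) + φ (π x) (π y)) m n) p =
      (fun x y : M => l (π x) y + r x (π y) + φ (π x) (π y)) m
        ((fun x y : M => l (π x) y + r x (π y) + φ (π x) (π y)) n p)) ∧
    (∀ m n : M,
      π (l (π m) n + r m (π n) + φ (π m) (π n)) = π m * π n) := by
  have hmul : ∀ m n : M, π (l (π m) n + r m (π n) + φ (π m) (π n)) = π m * π n := by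
    intro m n
    rw [map_add]
    exact (hπ m n).symm
  refine ⟨?_, hmul⟩
  intro m n p
  simp only
  rw [hmul, hmul]
  simp only [map_add, LinearMap.add_apply, hl, hr, hlr]
  have hc := hφ (π m) (π n) (π p)
  linear_combination (norm := abel) -hc
end

section
/- Let A be a unital associative algebra over a commutative ring k, M an A-bimodule, f : M → A a surjective A-bimodule morphism (f(a·m) = af(m) and f(m·a) = f(m)a), and e ∈ M an element with f(e) = 1_A. Then φ(a, b) := −a·e·b is a Hochschild 2-cocycle in C²(A, M), and f is a φ-twisted Rota-Baxter operator: f(m)f(n) = f(f(m)·n + m·f(n)) + f(φ(f(m), f(n))) for all m, n ∈ M. -/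
/-- Let `A` be unital, `f : M → A` a surjective `A`-bimodule
morphism, and `e ∈ M` with `f(e) = 1`. Then `φ(a, b) := −a·e·b` is a Hochschild
2-cocycle and `f` is a `φ`-twisted Rota-Baxter operator. -/
theorem stmt14 (k A M : Type*) [CommRing k]
    [Ring A] [Algebra k A]
    [AddCommGroup M] [Module k M]
    (l : A →ₗ[k] M →ₗ[k] M) (r : M →ₗ[k] A →ₗ[k] M)
    (hl : ∀ (a b : A) (m : M), l (a * b) m = l a (l b m))
    (hr : ∀ (m : M) (a b : A), r (r m a) b = r m (a * b))
    (hlr : ∀ (a : A) (m : M) (b : A), r (l a m) b = l a (r m b))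
    (h1l : ∀ m : M, l 1 m = m)
    (h1r : ∀ m : M, r m 1 = m)
    (f : M →ₗ[k] A)
    (hfl : ∀ (a : A) (m : M), f (l a m) = a * f m)
    (hfr : ∀ (m : M) (a : A), f (r m a) = f m * a)
    (hfsurj : Function.Surjective f)
    (e : M) (he : f e = 1) :
    -- φ(a, b) := −a·e·b is a Hochschild 2-cocycle in C²(A, M)
    (∀ a b c : A,
      l a (-(l b (r e c))) - (-(l (a * b) (r e c))) + (-(l a (r e (b * c)))) -
        r (-(l a (r e b))) c = 0) ∧
    -- f is a φ-twisted Rota-Baxter operator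
    (∀ m n : M,
      f m * f n = f (l (f m) n + r m (f n)) + f (-(l (f m) (r e (f n))))) := by
  constructor
  · intro a b c
    simp only [map_neg, LinearMap.neg_apply, hl, hlr, hr]
    abel
  · intro m n
    simp only [map_add, map_neg, hfl, hfr, he, one_mul, mul_one]
    abel
end

section
/- Let A be an associative algebra over a commutative ring k, M an A-bimodule, φ ∈ C²(A, M) a Hochschild 2-cocycle, and π : M → A a φ-twisted Rota-Baxter operator. Then M is an NS-algebra under the three bilinear operations m ≻ n := π(m)·n, m ≺ n := m·π(n), and m ∨ n := φ(π(m), π(n)); that is, these operations satisfy all four NS-algebra axioms. -/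
/-- If `π : M → A` is a `φ`-twisted Rota-Baxter operator, then `M`
is an NS-algebra under `m ≻ n := π(m)·n`, `m ≺ n := m·π(n)`,
`m ∨ n := φ(π(m), π(n))`. -/
theorem stmt18 (k A M : Type*) [CommRing k]
    [NonUnitalRing A] [Module k A] [SMulCommClass k A A] [IsScalarTower k A A]
    [AddCommGroup M] [Module k M]
    (l : A →ₗ[k] M →ₗ[k] M) (r : M →ₗ[k] A →ₗ[k] M)
    (hl : ∀ (a b : A) (m : M), l (a * b) m = l a (l b m))
    (hr : ∀ (m : M) (a b : A), r (r m a) b = r m (a * b))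
    (hlr : ∀ (a : A) (m : M) (b : A), r (l a m) b = l a (r m b))
    (φ : A →ₗ[k] A →ₗ[k] M)
    (hφ : ∀ a b c : A, l a (φ b c) - φ (a * b) c + φ a (b * c) - r (φ a b) c = 0)
    (π : M →ₗ[k] A)
    (hπ : ∀ m n : M,
      π m * π n = π (l (π m) n + r m (π n)) + π (φ (π m) (π n))) :
    -- (m ≺ n) ≺ p = m ≺ (n ≻ p + n ≺ p + n ∨ p)
    (∀ m n p : M, r (r m (π n)) (π p) =
      r m (π (l (π n) p + r n (π p) + φ (π n) (π p)))) ∧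
    -- (m ≻ n) ≺ p = m ≻ (n ≺ p)
    (∀ m n p : M, r (l (π m) n) (π p) = l (π m) (r n (π p))) ∧
    -- m ≻ (n ≻ p) = (m ≻ n + m ≺ n + m ∨ n) ≻ p
    (∀ m n p : M, l (π m) (l (π n) p) =
      l (π (l (π m) n + r m (π n) + φ (π m) (π n))) p) ∧
    -- m ≻ (n ∨ p) − (m × n) ∨ p + m ∨ (n × p) − (m ∨ n) ≺ p = 0
    (∀ m n p : M,
      l (π m) (φ (π n) (π p)) -
        φ (π (l (π m) n + r m (π n) + φ (π m) (π n))) (π p) +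
        φ (π m) (π (l (π n) p + r n (π p) + φ (π n) (π p))) -
        r (φ (π m) (π n)) (π p) = 0) := by
  have key : ∀ m n : M,
      π (l (π m) n + r m (π n) + φ (π m) (π n)) = π m * π n := by
    intro m n
    have := hπ m n
    simp only [map_add] at this ⊢
    exact this.symm
  refine ⟨?_, ?_, ?_, ?_⟩
  · intro m n p
    rw [key n p, hr]
  · intro m n p
    exact hlr _ _ _
  · intro m n p
    rw [key m n, hl]
  · intro m n p
    rw [key m n, key n p]
    exact hφ (π m) (π n) (π p)
end
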